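/- For all d ≥ 1 and n ≥ 1, s(d, 2n) = x^{2n-d-1} q^{2n² - 2dn - n + d² + 2d} · C(n-1, 2n-d-1)_{q²}, where C(A,B)_{q²} denotes the Gaussian binomial coefficient in the variable q². -/

import Mathlib

/-- A Euclidean billiard partition: a strictly decreasing list of positive
integers, whose smallest (last) part is even, and in which no two adjacent
parts are both odd. -/
def EBP (L : List ℕ) : Prop :=
  L ≠ [] ∧ (∀ m ∈ L, 0 < m) ∧ L.Chain' (· > ·) ∧
    Even (L.getLastD 1) ∧ L.Chain' fun a b => ¬(Odd a ∧ Odd b)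


/-- An irreducible Euclidean billiard partition: additionally the smallest
part equals 2 and adjacent parts differ by at most 2. -/
def IrrEBP (L : List ℕ) : Prop :=
  EBP L ∧ L.getLastD 1 = 2 ∧ L.Chain' fun a b => a ≤ b + 2

/-- The number of odd parts of a list. -/
def oddCount (L : List ℕ) : ℕ := (L.filter fun m => m % 2 = 1).length

/-- The weight exponent: `d - 1 - 2s` if the largest part is even and
`d - 2s` if it is odd, where `d` is the number of parts and `s` the number
of odd parts. -/
def wt (L : List ℕ) : ℕ :=
  if L.headD 0 % 2 = 0 then L.length - 1 - 2 * oddCount L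
  else L.length - 2 * oddCount L

/-- The generating polynomial `s(d, N) = Σ_π x^{wt π} q^{|π|}` over irreducible
Euclidean billiard partitions with `d` parts and largest part `N`, where
`x = X 0` and `q = X 1`. -/
noncomputable def sPoly (d N : ℕ) : MvPolynomial (Fin 2) ℤ :=
  ∑ᶠ L ∈ {L : List ℕ | IrrEBP L ∧ L.length = d ∧ L.headD 0 = N},
    MvPolynomial.X 0 ^ wt L * MvPolynomial.X 1 ^ L.sum

/-- The Gaussian binomial coefficient `[a choose b]_t`, defined via the
`q`-Pascal recurrence `[a+1, b+1]_t = [a, b]_t + t^{b+1} [a, b+1]_t`. -/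
def gbinom {R : Type*} [CommRing R] (t : R) : ℕ → ℕ → R
  | _, 0 => 1
  | 0, _ + 1 => 0
  | a + 1, b + 1 => gbinom t a b + t ^ (b + 1) * gbinom t a (b + 1)

/-- The Gaussian binomial with an integer lower index, equal to `0` when the
lower index is negative. -/
def gbinomZ {R : Type*} [CommRing R] (t : R) (a : ℕ) (b : ℤ) : R :=
  if 0 ≤ b then gbinom t a b.toNat else 0

/-! The constraints force an irreducible Euclidean billiard partition with largest part `2n + 2`
to contain every even number `2, 4, …, 2n + 2`, and between `2k + 4` and `2k + 2` it may or may
not contain the odd part `2k + 3` (two odd parts can never be adjacent). Such partitions are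
therefore encoded by the sets `S ⊆ {0, …, n - 1}` of their odd parts: with `s = #S` there are
`n + 1 + s` parts, the weight is `n - s` and the size is `(n + 1)(n + 2) + 3s + 2 ∑ S`. Summing
`q^(2 ∑ S)` over the `s`-subsets of `{0, …, n - 1}` gives `q^(s(s - 1)) [n, n - s]_{q²}`, by the
`q`-Pascal recurrence obtained from splitting off the largest element. -/

section GaussianBinomial

variable {R : Type*} [CommRing R] (t : R)

lemma gbinom_zero_right (a : ℕ) : gbinom t a 0 = 1 := by cases a <;> rfl

lemma gbinom_succ_succ (a b : ℕ) :
    gbinom t (a + 1) (b + 1) = gbinom t a b + t ^ (b + 1) * gbinom t a (b + 1) := rfl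

lemma gbinom_eq_zero_of_lt {a b : ℕ} (h : a < b) : gbinom t a b = 0 := by
  induction a generalizing b with
  | zero => obtain ⟨b, rfl⟩ := Nat.exists_eq_add_one_of_ne_zero h.ne'; rfl
  | succ a ih =>
    obtain ⟨b, rfl⟩ := Nat.exists_eq_add_one_of_ne_zero (by omega : b ≠ 0)
    rw [gbinom_succ_succ, ih (by omega), ih (by omega), mul_zero, add_zero]

lemma gbinom_self (a : ℕ) : gbinom t a a = 1 := by
  induction a with
  | zero => rfl
  | succ a ih => rw [gbinom_succ_succ, ih, gbinom_eq_zero_of_lt t (Nat.lt_succ_self a), mul_zero,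
      add_zero]

lemma gbinomZ_natCast (a b : ℕ) : gbinomZ t a b = gbinom t a b := by
  simp [gbinomZ]

lemma gbinomZ_of_neg (a : ℕ) {b : ℤ} (hb : b < 0) : gbinomZ t a b = 0 :=
  if_neg hb.not_ge

lemma gbinomZ_succ_left (a b : ℕ) :
    gbinomZ t (a + 1) b = gbinomZ t a (b - 1) + t ^ b * gbinomZ t a b := by
  cases b with
  | zero => simp [gbinomZ, gbinom_zero_right]
  | succ b =>
    rw [gbinomZ_natCast, gbinomZ_natCast, Nat.cast_add_one, add_sub_cancel_right,
      gbinomZ_natCast, gbinom_succ_succ]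

lemma gbinomZ_eq_zero_of_lt {a : ℕ} {b : ℤ} (h : a < b) :
    gbinomZ t a b = 0 := by
  rw [gbinomZ, if_pos (by omega), gbinom_eq_zero_of_lt t (by omega)]

end GaussianBinomial

lemma Finset.sum_powersetCard_succ_insert {α M : Type*} [DecidableEq α] [AddCommMonoid M]
    {a : α} {s : Finset α} (ha : a ∉ s) (k : ℕ) (f : Finset α → M) :
    ∑ u ∈ (insert a s).powersetCard (k + 1), f u =
      ∑ u ∈ s.powersetCard (k + 1), f u + ∑ u ∈ s.powersetCard k, f (insert a u) := by
  rw [powersetCard_succ_insert ha, sum_union, sum_image]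
  · exact insert_erase_invOn.2.injOn.mono fun u hu ↦ notMem_mono (mem_powersetCard.1 hu).1 ha
  · exact disjoint_left.2 fun u hu hu' ↦ by
      obtain ⟨v, -, rfl⟩ := mem_image.1 hu'
      exact ha ((mem_powersetCard.1 hu).1 (mem_insert_self a v))

open Finset in
lemma sum_powersetCard_range_pow_sum {R : Type*} [CommRing R] (t : R) (m s : ℕ) :
    ∑ S ∈ (range m).powersetCard s, t ^ (∑ k ∈ S, k) =
      t ^ s.choose 2 * gbinomZ t m ((m : ℤ) - s) := by
  induction m generalizing s with
  | zero =>
    cases s with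
    | zero => simp [gbinomZ, gbinom_zero_right]
    | succ s =>
      rw [powersetCard_eq_empty.2 (by simp), sum_empty, gbinomZ_of_neg t 0 (by omega), mul_zero]
  | succ m ih =>
    cases s with
    | zero =>
      rw [Nat.cast_zero, sub_zero, gbinomZ_natCast, gbinom_self, powersetCard_zero, sum_singleton,
        sum_empty, pow_zero, Nat.choose_zero_succ, pow_zero, one_mul]
    | succ s =>
      have hshift : ∑ S ∈ (range m).powersetCard s, t ^ (∑ k ∈ insert m S, k) =
          t ^ m * ∑ S ∈ (range m).powersetCard s, t ^ (∑ k ∈ S, k) := by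
        rw [mul_sum]
        refine sum_congr rfl fun S hS ↦ ?_
        have hm : m ∉ S := fun h ↦ by simpa using (mem_powersetCard.1 hS).1 h
        rw [sum_insert hm, pow_add]
      rw [range_add_one, sum_powersetCard_succ_insert notMem_range_self, hshift, ih, ih,
        Nat.choose_succ_succ', Nat.choose_one_right]
      rcases le_or_gt s m with hsm | hms
      · obtain ⟨b, rfl⟩ := Nat.exists_eq_add_of_le hsm
        have hb : ((s + b + 1 : ℕ) : ℤ) - (s + 1 : ℕ) = b := by push_cast; ring
        rw [hb, gbinomZ_succ_left, show ((s + b : ℕ) : ℤ) - (s + 1 : ℕ) = b - 1 by push_cast; ring,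
          show ((s + b : ℕ) : ℤ) - s = b by push_cast; ring]
        ring
      · rw [gbinomZ_of_neg t _ (by omega), gbinomZ_of_neg t _ (by omega),
          gbinomZ_of_neg t _ (by omega)]
        ring

lemma irrEBP_singleton_iff {a : ℕ} : IrrEBP [a] ↔ a = 2 := by
  constructor
  · exact fun h ↦ h.2.1
  · rintro rfl
    exact ⟨⟨by simp, by simp, List.isChain_singleton _, by decide, List.isChain_singleton _⟩, rfl,
      List.isChain_singleton _⟩

lemma irrEBP_cons_cons_iff {a b : ℕ} {l : List ℕ} :
    IrrEBP (a :: b :: l) ↔ (b < a ∧ a ≤ b + 2 ∧ ¬(Odd a ∧ Odd b)) ∧ IrrEBP (b :: l) := by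
  simp only [IrrEBP, EBP, List.Chain', List.getLastD_cons, List.isChain_cons_cons, List.mem_cons,
    forall_eq_or_imp, ne_eq, reduceCtorEq, not_false_eq_true, true_and, gt_iff_lt]
  grind

lemma IrrEBP.two_le_head {a : ℕ} {l : List ℕ} (h : IrrEBP (a :: l)) : 2 ≤ a := by
  induction l generalizing a with
  | nil => exact (irrEBP_singleton_iff.1 h).ge
  | cons b l ih =>
    obtain ⟨⟨hba, -⟩, hb⟩ := irrEBP_cons_cons_iff.1 h
    exact (ih hb).trans hba.le

/-- The irreducible partition with largest part `2n + 2` in which the odd part `2k + 3` (between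
`2k + 4` and `2k + 2`) occurs iff `k ∈ S`; elements of `S` that are `≥ n` are ignored. -/
def irrEBPOfSet : ℕ → Finset ℕ → List ℕ
  | 0, _ => [2]
  | n + 1, S => 2 * (n + 2) :: if n ∈ S then (2 * n + 3) :: irrEBPOfSet n S else irrEBPOfSet n S

lemma irrEBPOfSet_eq_cons (n : ℕ) (S : Finset ℕ) : ∃ T, irrEBPOfSet n S = 2 * (n + 1) :: T := by
  cases n <;> exact ⟨_, rfl⟩

lemma headD_irrEBPOfSet (n : ℕ) (S : Finset ℕ) : (irrEBPOfSet n S).headD 0 = 2 * (n + 1) := by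
  obtain ⟨T, hT⟩ := irrEBPOfSet_eq_cons n S
  rw [hT, List.headD_cons]

lemma irrEBP_irrEBPOfSet (n : ℕ) (S : Finset ℕ) : IrrEBP (irrEBPOfSet n S) := by
  induction n with
  | zero => exact irrEBP_singleton_iff.2 rfl
  | succ n ih =>
    obtain ⟨T, hT⟩ := irrEBPOfSet_eq_cons n S
    have not_odd_odd {a b : ℕ} (h : a % 2 = 0 ∨ b % 2 = 0) : ¬(Odd a ∧ Odd b) := by
      simp only [Nat.odd_iff]; omega
    rw [hT] at ih
    by_cases hn : n ∈ S
    · rw [irrEBPOfSet, if_pos hn, hT]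
      exact irrEBP_cons_cons_iff.2 ⟨⟨by omega, by omega, not_odd_odd (by omega)⟩,
        irrEBP_cons_cons_iff.2 ⟨⟨by omega, by omega, not_odd_odd (by omega)⟩, ih⟩⟩
    · rw [irrEBPOfSet, if_neg hn, hT]
      exact irrEBP_cons_cons_iff.2 ⟨⟨by omega, by omega, not_odd_odd (by omega)⟩, ih⟩

section irrEBPOfSet

open Finset

variable (n : ℕ) (S : Finset ℕ)

lemma length_irrEBPOfSet :
    (irrEBPOfSet n S).length = n + 1 + #((range n).filter (· ∈ S)) := by
  induction n with
  | zero => rfl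
  | succ n ih =>
    rw [range_add_one, filter_insert]
    by_cases hn : n ∈ S
    · rw [irrEBPOfSet, if_pos hn, if_pos hn, card_insert_of_notMem (by simp)]
      simp only [List.length_cons, ih]
      omega
    · rw [irrEBPOfSet, if_neg hn, if_neg hn]
      simp only [List.length_cons, ih]
      omega

lemma oddCount_irrEBPOfSet : oddCount (irrEBPOfSet n S) = #((range n).filter (· ∈ S)) := by
  induction n with
  | zero => rfl
  | succ n ih =>
    rw [range_add_one, filter_insert]
    by_cases hn : n ∈ S
    · rw [irrEBPOfSet, if_pos hn, if_pos hn, card_insert_of_notMem (by simp), ← ih]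
      simp [oddCount, Nat.mul_mod_right, Nat.add_mod]
    · rw [irrEBPOfSet, if_neg hn, if_neg hn, ← ih]
      simp [oddCount, Nat.mul_mod_right]

lemma sum_irrEBPOfSet :
    (irrEBPOfSet n S).sum = (n + 1) * (n + 2) + ∑ k ∈ (range n).filter (· ∈ S), (2 * k + 3) := by
  induction n with
  | zero => rfl
  | succ n ih =>
    rw [range_add_one, filter_insert]
    by_cases hn : n ∈ S
    · rw [irrEBPOfSet, if_pos hn, if_pos hn, sum_insert (by simp)]
      simp only [List.sum_cons, ih]
      ring
    · rw [irrEBPOfSet, if_neg hn, if_neg hn]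
      simp only [List.sum_cons, ih]
      ring

lemma odd_mem_irrEBPOfSet_iff (k : ℕ) : 2 * k + 3 ∈ irrEBPOfSet n S ↔ k ∈ S ∧ k < n := by
  induction n with
  | zero => simp [irrEBPOfSet]
  | succ n ih =>
    by_cases hn : n ∈ S
    · simp only [irrEBPOfSet, if_pos hn, List.mem_cons, ih]
      grind
    · simp only [irrEBPOfSet, if_neg hn, List.mem_cons, ih]
      grind

variable {S} in
lemma irrEBPOfSet_congr {S' : Finset ℕ} (h : ∀ k < n, k ∈ S ↔ k ∈ S') :
    irrEBPOfSet n S = irrEBPOfSet n S' := by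
  induction n with
  | zero => rfl
  | succ n ih =>
    simp only [irrEBPOfSet, h n n.lt_succ_self, ih fun k hk ↦ h k (by omega)]

end irrEBPOfSet

open Finset in
lemma exists_irrEBPOfSet_eq {n : ℕ} {L : List ℕ} (hL : IrrEBP L) (hhead : L.headD 0 = 2 * (n + 1)) :
    ∃ S ⊆ range n, irrEBPOfSet n S = L := by
  induction n generalizing L with
  | zero =>
    obtain ⟨a, T, rfl⟩ := List.exists_cons_of_ne_nil hL.1.1
    obtain rfl : a = 2 := hhead
    cases T with
    | nil => exact ⟨∅, empty_subset _, rfl⟩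
    | cons b T =>
      obtain ⟨⟨hb, -⟩, hbT⟩ := irrEBP_cons_cons_iff.1 hL
      exact absurd hbT.two_le_head (by omega)
  | succ n ih =>
    obtain ⟨a, T, rfl⟩ := List.exists_cons_of_ne_nil hL.1.1
    obtain rfl : a = 2 * (n + 2) := hhead
    cases T with
    | nil => exact absurd (irrEBP_singleton_iff.1 hL) (by omega)
    | cons b T =>
      obtain ⟨⟨hba, hab, -⟩, hbT⟩ := irrEBP_cons_cons_iff.1 hL
      obtain rfl | rfl : b = 2 * n + 3 ∨ b = 2 * (n + 1) := by omega
      · cases T with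
        | nil => exact absurd (irrEBP_singleton_iff.1 hbT) (by omega)
        | cons c T =>
          obtain ⟨⟨hcb, hbc, hodd⟩, hcT⟩ := irrEBP_cons_cons_iff.1 hbT
          obtain rfl : c = 2 * (n + 1) := by
            rcases (by omega : c = 2 * (n + 1) ∨ c = 2 * n + 1) with h | rfl
            · exact h
            · exact absurd ⟨⟨n + 1, by ring⟩, ⟨n, rfl⟩⟩ hodd
          obtain ⟨S, hS, hST⟩ := ih hcT rfl
          refine ⟨insert n S, insert_subset_iff.2 ⟨by simp, hS.trans (range_subset_range.2
            n.le_succ)⟩, ?_⟩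
          rw [irrEBPOfSet, if_pos (mem_insert_self n S),
            irrEBPOfSet_congr (S' := S) n fun k hk ↦ by simp [hk.ne], hST]
      · obtain ⟨S, hS, hST⟩ := ih hbT rfl
        refine ⟨S, hS.trans (range_subset_range.2 n.le_succ), ?_⟩
        rw [irrEBPOfSet, if_neg fun h ↦ by simpa using hS h, hST]

section sPoly

open Finset MvPolynomial

lemma irrEBP_and_headD_iff {n : ℕ} {L : List ℕ} :
    IrrEBP L ∧ L.headD 0 = 2 * (n + 1) ↔ ∃ S ⊆ range n, irrEBPOfSet n S = L :=
  ⟨fun h ↦ exists_irrEBPOfSet_eq h.1 h.2,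
    fun ⟨S, _, hS⟩ ↦ hS ▸ ⟨irrEBP_irrEBPOfSet n S, headD_irrEBPOfSet n S⟩⟩

lemma injOn_irrEBPOfSet (n : ℕ) : Set.InjOn (irrEBPOfSet n) {S | S ⊆ range n} := by
  intro S hS S' hS' h
  ext k
  by_cases hk : k < n
  · simpa only [odd_mem_irrEBPOfSet_iff, hk, and_true, eq_iff_iff] using
      congrArg (2 * k + 3 ∈ ·) h
  · exact iff_of_false (fun h ↦ hk (by simpa using hS h)) (fun h ↦ hk (by simpa using hS' h))

lemma sPoly_eq_zero_of_lt {d n : ℕ} (h : d < n + 1) : sPoly d (2 * (n + 1)) = 0 := by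
  have hempty : {L | IrrEBP L ∧ L.length = d ∧ L.headD 0 = 2 * (n + 1)} = ∅ := by
    refine Set.eq_empty_of_forall_notMem fun L ⟨hL, hlen, hhead⟩ ↦ ?_
    obtain ⟨S, -, rfl⟩ := irrEBP_and_headD_iff.1 ⟨hL, hhead⟩
    rw [length_irrEBPOfSet] at hlen
    omega
  rw [sPoly, hempty, finsum_mem_empty]

lemma sPoly_succ_add (n s : ℕ) :
    sPoly (n + 1 + s) (2 * (n + 1)) =
      X 0 ^ (n - s) * X 1 ^ ((n + 1) * (n + 2) + 3 * s) *
        ∑ S ∈ (range n).powersetCard s, (X 1 ^ 2) ^ (∑ k ∈ S, k) := by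
  have hset : {L | IrrEBP L ∧ L.length = n + 1 + s ∧ L.headD 0 = 2 * (n + 1)} =
      irrEBPOfSet n '' ((range n).powersetCard s : Set (Finset ℕ)) := by
    ext L
    simp only [Set.mem_ofPred_eq, Set.mem_image, mem_coe, mem_powersetCard]
    constructor
    · rintro ⟨hL, hlen, hhead⟩
      obtain ⟨S, hS, rfl⟩ := irrEBP_and_headD_iff.1 ⟨hL, hhead⟩
      rw [length_irrEBPOfSet, filter_mem_eq_of_subset hS] at hlen
      exact ⟨S, ⟨hS, by omega⟩, rfl⟩
    · rintro ⟨S, ⟨hS, rfl⟩, rfl⟩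
      exact ⟨irrEBP_irrEBPOfSet n S, by rw [length_irrEBPOfSet, filter_mem_eq_of_subset hS],
        headD_irrEBPOfSet n S⟩
  rw [sPoly, hset, finsum_mem_image ((injOn_irrEBPOfSet n).mono fun S hS ↦
    (mem_powersetCard.1 hS).1), finsum_mem_coe_finset, mul_sum]
  refine sum_congr rfl fun S hS ↦ ?_
  obtain ⟨hsub, rfl⟩ := mem_powersetCard.1 hS
  have hwt : wt (irrEBPOfSet n S) = n - #S := by
    rw [wt, headD_irrEBPOfSet, if_pos (by omega), length_irrEBPOfSet, oddCount_irrEBPOfSet,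
      filter_mem_eq_of_subset hsub]
    omega
  have hsum : (irrEBPOfSet n S).sum = (n + 1) * (n + 2) + 3 * #S + 2 * ∑ k ∈ S, k := by
    rw [sum_irrEBPOfSet, filter_mem_eq_of_subset hsub, sum_add_distrib, ← mul_sum, sum_const,
      smul_eq_mul]
    ring
  rw [hwt, hsum, pow_add, pow_mul, mul_assoc]

end sPoly

lemma two_mul_choose_two_add_self (s : ℕ) : 2 * s.choose 2 + s = s ^ 2 := by
  induction s with
  | zero => rfl
  | succ s ih =>
    rw [Nat.choose_succ_succ', Nat.choose_one_right]
    linarith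

theorem sPoly_even_closed_general (d n : ℕ) (hn : 1 ≤ n) :
    sPoly d (2 * n) =
      MvPolynomial.X 0 ^ (2 * n - d - 1) *
        MvPolynomial.X 1 ^ ((2 * n ^ 2 + d ^ 2 + 2 * d) - (2 * d * n + n)) *
        gbinomZ (MvPolynomial.X 1 ^ 2) (n - 1)
          ((2 * n : ℤ) - (d : ℤ) - 1) := by
  obtain ⟨m, rfl⟩ : ∃ m, n = m + 1 := ⟨n - 1, by omega⟩
  rcases lt_or_ge d (m + 1) with hlt | hge
  · rw [sPoly_eq_zero_of_lt hlt, gbinomZ_eq_zero_of_lt _ (by omega), mul_zero]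
  obtain ⟨s, rfl⟩ := Nat.exists_eq_add_of_le hge
  have hx : 2 * (m + 1) - (m + 1 + s) - 1 = m - s := by omega
  have hq : (2 * (m + 1) ^ 2 + (m + 1 + s) ^ 2 + 2 * (m + 1 + s)) -
      (2 * (m + 1 + s) * (m + 1) + (m + 1)) = (m + 1) * (m + 2) + 3 * s + 2 * s.choose 2 := by
    have := two_mul_choose_two_add_self s
    apply Nat.sub_eq_of_eq_add
    linarith
  have hidx : 2 * ((m + 1 : ℕ) : ℤ) - ((m + 1 + s : ℕ) : ℤ) - 1 = m - s := by push_cast; ring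
  rw [sPoly_succ_add, sum_powersetCard_range_pow_sum, hx, hq, hidx, Nat.add_sub_cancel, pow_add,
    pow_mul]
  ring

/-- Closed form `s(d, 2n) = x^{2n-d-1} q^{2n²-2dn-n+d²+2d} [n-1, 2n-d-1]_{q²}`
for `d, n ≥ 1`. -/
theorem sPoly_even_closed (d n : ℕ) (hd : 1 ≤ d) (hn : 1 ≤ n) :
    sPoly d (2 * n) =
      MvPolynomial.X 0 ^ (2 * n - d - 1) *
        MvPolynomial.X 1 ^ ((2 * n ^ 2 + d ^ 2 + 2 * d) - (2 * d * n + n)) *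
        gbinomZ (MvPolynomial.X 1 ^ 2) (n - 1)
          ((2 * n : ℤ) - (d : ℤ) - 1) :=
  sPoly_even_closed_general d n hn
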